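/- arXiv:gr-qc/0201054 — 2 statements merged into one kernel-verified Lean document; each statement's English description precedes it below -/
import Mathlib

section
/- Let Σ be a rigged hypersurface in a pseudo-Riemannian manifold with rigged connection ∇̄, second fundamental form K, rigging shape tensor Ψ(α, X) = α(∇_X ℓ) (for α annihilating ℓ), and ambient curvature R. Then the generalized Gauss equation holds: ω^d(R(e_a, e_b)e_c) = R̄^d_{cab} - K_{ac} Ψ^d_b + K_{ab} Ψ^d_c, where R̄ is the curvature of ∇̄ and {ω^a} is the dual coframe to the tangent frame {e_a} within the annihilator of ℓ. -/
noncomputable section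

/-- Partial derivative in the `a`-th coordinate direction on `ℝ³`. -/
def pd (f : (Fin 3 → ℝ) → ℝ) (a : Fin 3) (ξ : Fin 3 → ℝ) : ℝ :=
  fderiv ℝ f ξ (Pi.single a 1)

/-- Ambient covariant derivative along `e a` of an ambient vector field along Σ. -/
def cov (Ch : (Fin 3 → ℝ) → Fin 4 → Fin 4 → Fin 4 → ℝ)
    (e : Fin 3 → (Fin 3 → ℝ) → Fin 4 → ℝ)
    (a : Fin 3) (V : (Fin 3 → ℝ) → Fin 4 → ℝ) (ξ : Fin 3 → ℝ) (μ : Fin 4) : ℝ :=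
  pd (fun ζ => V ζ μ) a ξ + ∑ ν, ∑ ρ, Ch ξ μ ν ρ * e a ξ ν * V ξ ρ

/-- Christoffel symbols `Γ̄^c_{ba} = ω^c(∇_{e_a} e_b)` of the rigged connection
(first lower index `b`, derivative index `a`). -/
def Gbar (Ch : (Fin 3 → ℝ) → Fin 4 → Fin 4 → Fin 4 → ℝ)
    (e : Fin 3 → (Fin 3 → ℝ) → Fin 4 → ℝ)
    (ω : Fin 3 → (Fin 3 → ℝ) → Fin 4 → ℝ)
    (c b a : Fin 3) (ξ : Fin 3 → ℝ) : ℝ :=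
  ∑ μ, ω c ξ μ * cov Ch e a (e b) ξ μ

/-- Second fundamental form `K_{ab} = -n(∇_{e_a} e_b)`. -/
def sff (Ch : (Fin 3 → ℝ) → Fin 4 → Fin 4 → Fin 4 → ℝ)
    (e : Fin 3 → (Fin 3 → ℝ) → Fin 4 → ℝ)
    (n : (Fin 3 → ℝ) → Fin 4 → ℝ) (a b : Fin 3) (ξ : Fin 3 → ℝ) : ℝ :=
  -∑ μ, n ξ μ * cov Ch e a (e b) ξ μ

/-- The shape tensor of the rigging, `Ψ^a_b = ω^a(∇_{e_b} ℓ)`. -/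
def PsiF (Ch : (Fin 3 → ℝ) → Fin 4 → Fin 4 → Fin 4 → ℝ)
    (e : Fin 3 → (Fin 3 → ℝ) → Fin 4 → ℝ)
    (ω : Fin 3 → (Fin 3 → ℝ) → Fin 4 → ℝ)
    (ℓ : (Fin 3 → ℝ) → Fin 4 → ℝ) (a b : Fin 3) (ξ : Fin 3 → ℝ) : ℝ :=
  ∑ μ, ω a ξ μ * cov Ch e b ℓ ξ μ

/-- Curvature tensor `R̄^d_{abc}` of a connection on Σ with coefficients
`Cb ξ d a c = Γ̄^d_{ac}` (derivative index last):
`R̄^d_{abc} = ∂_b Γ̄^d_{ac} - ∂_c Γ̄^d_{ab} + Γ̄^d_{bf} Γ̄^f_{ac} - Γ̄^d_{cf} Γ̄^f_{ab}`. -/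
def RbarF (Cb : (Fin 3 → ℝ) → Fin 3 → Fin 3 → Fin 3 → ℝ)
    (d a b c : Fin 3) (ξ : Fin 3 → ℝ) : ℝ :=
  pd (fun ζ => Cb ζ d a c) b ξ - pd (fun ζ => Cb ζ d a b) c ξ
    + (∑ f, Cb ξ d b f * Cb ξ f a c) - ∑ f, Cb ξ d c f * Cb ξ f a b

section AuxLemmas

lemma pd_contDiff {f : (Fin 3 → ℝ) → ℝ} (hf : ContDiff ℝ (⊤ : ℕ∞) f) (a : Fin 3) :
    ContDiff ℝ (⊤ : ℕ∞) (pd f a) :=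
  (hf.fderiv_right (by simp)).clm_apply contDiff_const

lemma pd_sub {f g : (Fin 3 → ℝ) → ℝ} {ξ : Fin 3 → ℝ} (a : Fin 3)
    (hf : DifferentiableAt ℝ f ξ) (hg : DifferentiableAt ℝ g ξ) :
    pd (fun ζ => f ζ - g ζ) a ξ = pd f a ξ - pd g a ξ := by
  simp [pd, fderiv_fun_sub hf hg]

lemma pd_mul {f g : (Fin 3 → ℝ) → ℝ} {ξ : Fin 3 → ℝ} (a : Fin 3)
    (hf : DifferentiableAt ℝ f ξ) (hg : DifferentiableAt ℝ g ξ) :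
    pd (fun ζ => f ζ * g ζ) a ξ = pd f a ξ * g ξ + f ξ * pd g a ξ := by
  simp [pd, fderiv_fun_mul hf hg]; ring

lemma pd_sum {ι : Type*} (s : Finset ι) {F : ι → (Fin 3 → ℝ) → ℝ} {ξ : Fin 3 → ℝ} (a : Fin 3)
    (hF : ∀ i ∈ s, DifferentiableAt ℝ (F i) ξ) :
    pd (fun ζ => ∑ i ∈ s, F i ζ) a ξ = ∑ i ∈ s, pd (F i) a ξ := by
  simp [pd, fderiv_fun_sum hF]

lemma sum_mul_swap {g : Fin 4 → ℝ} {F : Fin 3 → Fin 4 → ℝ} :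
    ∑ α, g α * ∑ f, F f α = ∑ f, ∑ α, g α * F f α := by
  simp only [Finset.mul_sum]; exact Finset.sum_comm

variable {Ch : (Fin 3 → ℝ) → Fin 4 → Fin 4 → Fin 4 → ℝ}
  {e : Fin 3 → (Fin 3 → ℝ) → Fin 4 → ℝ}

lemma cov_contDiff (hChs : ∀ α β γ, ContDiff ℝ (⊤ : ℕ∞) (fun ζ => Ch ζ α β γ))
    (he : ∀ a μ, ContDiff ℝ (⊤ : ℕ∞) (fun ζ => e a ζ μ))
    {V : (Fin 3 → ℝ) → Fin 4 → ℝ} (hV : ∀ ρ, ContDiff ℝ (⊤ : ℕ∞) (fun ζ => V ζ ρ))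
    (a : Fin 3) (μ : Fin 4) : ContDiff ℝ (⊤ : ℕ∞) (fun ξ => cov Ch e a V ξ μ) := by
  unfold cov
  exact (pd_contDiff (hV μ) a).add <| ContDiff.sum fun ν _ => ContDiff.sum fun ρ _ =>
    ((hChs μ ν ρ).mul (he a ν)).mul (hV ρ)

lemma cov_sub {V W : (Fin 3 → ℝ) → Fin 4 → ℝ} {ξ : Fin 3 → ℝ} (b : Fin 3) (μ : Fin 4)
    (hV : DifferentiableAt ℝ (fun ζ => V ζ μ) ξ) (hW : DifferentiableAt ℝ (fun ζ => W ζ μ) ξ) :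
    cov Ch e b (fun ζ ν => V ζ ν - W ζ ν) ξ μ = cov Ch e b V ξ μ - cov Ch e b W ξ μ := by
  unfold cov
  rw [pd_sub b hV hW]
  simp only [mul_sub, Finset.sum_sub_distrib]
  ring

lemma cov_sum {W : Fin 3 → (Fin 3 → ℝ) → Fin 4 → ℝ} {ξ : Fin 3 → ℝ} (b : Fin 3) (μ : Fin 4)
    (hW : ∀ f, DifferentiableAt ℝ (fun ζ => W f ζ μ) ξ) :
    cov Ch e b (fun ζ ν => ∑ f, W f ζ ν) ξ μ = ∑ f, cov Ch e b (W f) ξ μ := by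
  unfold cov
  rw [pd_sum Finset.univ b (fun f _ => hW f)]
  rw [Finset.sum_add_distrib]
  congr 1
  simp only [Finset.mul_sum]
  calc (∑ ν, ∑ ρ, ∑ f, Ch ξ μ ν ρ * e b ξ ν * W f ξ ρ)
      = ∑ ν, ∑ f, ∑ ρ, Ch ξ μ ν ρ * e b ξ ν * W f ξ ρ :=
        Finset.sum_congr rfl fun ν _ => Finset.sum_comm
    _ = ∑ f, ∑ ν, ∑ ρ, Ch ξ μ ν ρ * e b ξ ν * W f ξ ρ := Finset.sum_comm

lemma cov_smul {g : (Fin 3 → ℝ) → ℝ} {V : (Fin 3 → ℝ) → Fin 4 → ℝ} {ξ : Fin 3 → ℝ}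
    (b : Fin 3) (μ : Fin 4)
    (hg : DifferentiableAt ℝ g ξ) (hV : DifferentiableAt ℝ (fun ζ => V ζ μ) ξ) :
    cov Ch e b (fun ζ ν => g ζ * V ζ ν) ξ μ
      = pd g b ξ * V ξ μ + g ξ * cov Ch e b V ξ μ := by
  unfold cov
  rw [pd_mul b hg hV]
  have h2 : ∑ ν, ∑ ρ, Ch ξ μ ν ρ * e b ξ ν * (g ξ * V ξ ρ)
      = g ξ * ∑ ν, ∑ ρ, Ch ξ μ ν ρ * e b ξ ν * V ξ ρ := by
    simp only [Finset.mul_sum]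
    exact Finset.sum_congr rfl fun ν _ => Finset.sum_congr rfl fun ρ _ => by ring
  rw [h2]; ring

lemma cov_e_symm (hChsym : ∀ ξ α β γ, Ch ξ α β γ = Ch ξ α γ β)
    (hesym : ∀ ξ a b μ, pd (fun ζ => e b ζ μ) a ξ = pd (fun ζ => e a ζ μ) b ξ)
    (ξ : Fin 3 → ℝ) (b f : Fin 3) (μ : Fin 4) :
    cov Ch e b (e f) ξ μ = cov Ch e f (e b) ξ μ := by
  unfold cov
  rw [hesym ξ b f μ]
  congr 1
  rw [Finset.sum_comm]
  exact Finset.sum_congr rfl fun ν _ => Finset.sum_congr rfl fun ρ _ => by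
    rw [hChsym ξ μ ν ρ]; ring

variable {ω : Fin 3 → (Fin 3 → ℝ) → Fin 4 → ℝ}
  {ℓ n : (Fin 3 → ℝ) → Fin 4 → ℝ}

/-- Decomposition of `∇_{e_c} e_a` in the rigged frame. -/
lemma cov_decomp
    (hcomp : ∀ ξ μ ν, ℓ ξ μ * n ξ ν + ∑ a, e a ξ μ * ω a ξ ν
      = if μ = ν then (1 : ℝ) else 0)
    (ξ : Fin 3 → ℝ) (a c : Fin 3) (μ : Fin 4) :
    cov Ch e c (e a) ξ μ
      = (∑ f, Gbar Ch e ω f a c ξ * e f ξ μ) - sff Ch e n c a ξ * ℓ ξ μ := by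
  calc cov Ch e c (e a) ξ μ
      = ∑ ν, (if μ = ν then (1 : ℝ) else 0) * cov Ch e c (e a) ξ ν := by
        simp
    _ = ∑ ν, (ℓ ξ μ * n ξ ν + ∑ f, e f ξ μ * ω f ξ ν) * cov Ch e c (e a) ξ ν :=
        Finset.sum_congr rfl fun ν _ => by rw [hcomp ξ μ ν]
    _ = ℓ ξ μ * (∑ ν, n ξ ν * cov Ch e c (e a) ξ ν)
          + ∑ f, e f ξ μ * ∑ ν, ω f ξ ν * cov Ch e c (e a) ξ ν := by
        simp only [add_mul, Finset.sum_add_distrib, Finset.sum_mul, Finset.mul_sum]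
        congr 1
        · exact Finset.sum_congr rfl fun ν _ => by ring
        · rw [Finset.sum_comm]
          exact Finset.sum_congr rfl fun f _ => Finset.sum_congr rfl fun ν _ => by ring
    _ = (∑ f, Gbar Ch e ω f a c ξ * e f ξ μ) - sff Ch e n c a ξ * ℓ ξ μ := by
        unfold Gbar sff
        rw [neg_mul, sub_neg_eq_add, add_comm]
        congr 1
        · exact Finset.sum_congr rfl fun f _ => mul_comm _ _
        · exact mul_comm _ _

/-- The key contraction: `ω^d(∇_{e_b}∇_{e_c} e_a)`. -/
lemma key_contraction
    (hChsym : ∀ ξ α β γ, Ch ξ α β γ = Ch ξ α γ β)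
    (he : ∀ a μ, ContDiff ℝ (⊤ : ℕ∞) (fun ζ => e a ζ μ))
    (hℓs : ∀ μ, ContDiff ℝ (⊤ : ℕ∞) (fun ζ => ℓ ζ μ))
    (hns : ∀ μ, ContDiff ℝ (⊤ : ℕ∞) (fun ζ => n ζ μ))
    (hωs : ∀ a μ, ContDiff ℝ (⊤ : ℕ∞) (fun ζ => ω a ζ μ))
    (hChs : ∀ α β γ, ContDiff ℝ (⊤ : ℕ∞) (fun ζ => Ch ζ α β γ))
    (hωl : ∀ ξ a, ∑ μ, ω a ξ μ * ℓ ξ μ = 0)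
    (hωe : ∀ ξ a b, ∑ μ, ω a ξ μ * e b ξ μ = if a = b then (1 : ℝ) else 0)
    (hcomp : ∀ ξ μ ν, ℓ ξ μ * n ξ ν + ∑ a, e a ξ μ * ω a ξ ν
      = if μ = ν then (1 : ℝ) else 0)
    (ξ : Fin 3 → ℝ) (a b c d : Fin 3) :
    ∑ α, ω d ξ α * cov Ch e b (cov Ch e c (e a)) ξ α
      = pd (fun ζ => Gbar Ch e ω d a c ζ) b ξ
        + (∑ f, Gbar Ch e ω f a c ξ * Gbar Ch e ω d f b ξ)
        - sff Ch e n c a ξ * PsiF Ch e ω ℓ d b ξ := by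
  have hG : ∀ f, ContDiff ℝ (⊤ : ℕ∞) (fun ζ => Gbar Ch e ω f a c ζ) := fun f =>
    ContDiff.sum fun μ _ => (hωs f μ).mul (cov_contDiff hChs he (he a) c μ)
  have hS : ContDiff ℝ (⊤ : ℕ∞) (fun ζ => sff Ch e n c a ζ) :=
    (ContDiff.sum fun μ _ => (hns μ).mul (cov_contDiff hChs he (he a) c μ)).neg
  have hdec : cov Ch e c (e a)
      = fun ζ ν => (∑ f, Gbar Ch e ω f a c ζ * e f ζ ν) - sff Ch e n c a ζ * ℓ ζ ν := by
    funext ζ ν; exact cov_decomp hcomp ζ a c ν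
  have hcov : ∀ α, cov Ch e b (cov Ch e c (e a)) ξ α
      = (∑ f, (pd (fun ζ => Gbar Ch e ω f a c ζ) b ξ * e f ξ α
            + Gbar Ch e ω f a c ξ * cov Ch e b (e f) ξ α))
        - (pd (fun ζ => sff Ch e n c a ζ) b ξ * ℓ ξ α
            + sff Ch e n c a ξ * cov Ch e b ℓ ξ α) := by
    intro α
    rw [hdec]
    rw [cov_sub b α
      (DifferentiableAt.fun_sum fun f _ =>
        ((hG f).differentiable (by simp) ξ).mul ((he f α).differentiable (by simp) ξ))
      ((hS.differentiable (by simp) ξ).mul ((hℓs α).differentiable (by simp) ξ))]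
    rw [cov_sum b α (fun f =>
      ((hG f).differentiable (by simp) ξ).mul ((he f α).differentiable (by simp) ξ))]
    rw [cov_smul b α (hS.differentiable (by simp) ξ) ((hℓs α).differentiable (by simp) ξ)]
    congr 1
    exact Finset.sum_congr rfl fun f _ =>
      cov_smul b α ((hG f).differentiable (by simp) ξ) ((he f α).differentiable (by simp) ξ)
  calc ∑ α, ω d ξ α * cov Ch e b (cov Ch e c (e a)) ξ α
      = ∑ α, ω d ξ α *
          ((∑ f, (pd (fun ζ => Gbar Ch e ω f a c ζ) b ξ * e f ξ α
            + Gbar Ch e ω f a c ξ * cov Ch e b (e f) ξ α))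
          - (pd (fun ζ => sff Ch e n c a ζ) b ξ * ℓ ξ α
            + sff Ch e n c a ξ * cov Ch e b ℓ ξ α)) :=
        Finset.sum_congr rfl fun α _ => by rw [hcov α]
    _ = (∑ f, (pd (fun ζ => Gbar Ch e ω f a c ζ) b ξ * ∑ α, ω d ξ α * e f ξ α
            + Gbar Ch e ω f a c ξ * ∑ α, ω d ξ α * cov Ch e b (e f) ξ α))
          - (pd (fun ζ => sff Ch e n c a ζ) b ξ * ∑ α, ω d ξ α * ℓ ξ α
            + sff Ch e n c a ξ * ∑ α, ω d ξ α * cov Ch e b ℓ ξ α) := by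
        simp only [mul_sub, mul_add, Finset.sum_sub_distrib, Finset.sum_add_distrib,
          Finset.mul_sum]
        congr 2
        · rw [Finset.sum_comm]
          exact Finset.sum_congr rfl fun f _ => Finset.sum_congr rfl fun α _ => by ring
        · rw [Finset.sum_comm]
          exact Finset.sum_congr rfl fun f _ => Finset.sum_congr rfl fun α _ => by ring
        · exact Finset.sum_congr rfl fun α _ => by ring
        · exact Finset.sum_congr rfl fun α _ => by ring
    _ = pd (fun ζ => Gbar Ch e ω d a c ζ) b ξ
        + (∑ f, Gbar Ch e ω f a c ξ * Gbar Ch e ω d f b ξ)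
        - sff Ch e n c a ξ * PsiF Ch e ω ℓ d b ξ := by
        rw [hωl ξ d]
        have h1 : ∀ f : Fin 3, (∑ α, ω d ξ α * e f ξ α) = if d = f then (1:ℝ) else 0 :=
          fun f => hωe ξ d f
        have h2 : ∀ f : Fin 3, (∑ α, ω d ξ α * cov Ch e b (e f) ξ α) = Gbar Ch e ω d f b ξ :=
          fun f => rfl
        have h3 : (∑ α, ω d ξ α * cov Ch e b ℓ ξ α) = PsiF Ch e ω ℓ d b ξ := rfl
        simp only [h1, h2, h3]
        rw [Finset.sum_add_distrib]
        have h4 : (∑ f, pd (fun ζ => Gbar Ch e ω f a c ζ) b ξ * if d = f then (1:ℝ) else 0)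
            = pd (fun ζ => Gbar Ch e ω d a c ζ) b ξ := by
          simp
        rw [h4]; ring

end AuxLemmas

/-- Generalized Gauss equation for a rigged hypersurface:
`ω^d_α R^α_{βγδ} e_a^β e_b^γ e_c^δ = R̄^d_{abc} - K_{ac} Ψ^d_b + K_{ab} Ψ^d_c`. -/
theorem stmt6
    (Ch : (Fin 3 → ℝ) → Fin 4 → Fin 4 → Fin 4 → ℝ)
    (e : Fin 3 → (Fin 3 → ℝ) → Fin 4 → ℝ)
    (ℓ n : (Fin 3 → ℝ) → Fin 4 → ℝ)
    (ω : Fin 3 → (Fin 3 → ℝ) → Fin 4 → ℝ)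
    (Riem : (Fin 3 → ℝ) → Fin 4 → Fin 4 → Fin 4 → Fin 4 → ℝ)
    (hChsym : ∀ ξ α β γ, Ch ξ α β γ = Ch ξ α γ β)
    (hesym : ∀ ξ a b μ, pd (fun ζ => e b ζ μ) a ξ = pd (fun ζ => e a ζ μ) b ξ)
    (he : ∀ a μ, ContDiff ℝ (⊤ : ℕ∞) (fun ζ => e a ζ μ))
    (hℓs : ∀ μ, ContDiff ℝ (⊤ : ℕ∞) (fun ζ => ℓ ζ μ))
    (hns : ∀ μ, ContDiff ℝ (⊤ : ℕ∞) (fun ζ => n ζ μ))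
    (hωs : ∀ a μ, ContDiff ℝ (⊤ : ℕ∞) (fun ζ => ω a ζ μ))
    (hChs : ∀ α β γ, ContDiff ℝ (⊤ : ℕ∞) (fun ζ => Ch ζ α β γ))
    (hne : ∀ ξ a, ∑ μ, n ξ μ * e a ξ μ = 0)
    (hnl : ∀ ξ, ∑ μ, n ξ μ * ℓ ξ μ = 1)
    (hωl : ∀ ξ a, ∑ μ, ω a ξ μ * ℓ ξ μ = 0)
    (hωe : ∀ ξ a b, ∑ μ, ω a ξ μ * e b ξ μ = if a = b then (1 : ℝ) else 0)
    (hcomp : ∀ ξ μ ν, ℓ ξ μ * n ξ ν + ∑ a, e a ξ μ * ω a ξ ν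
      = if μ = ν then (1 : ℝ) else 0)
    (hRic : ∀ (V : (Fin 3 → ℝ) → Fin 4 → ℝ),
      (∀ ρ, ContDiff ℝ (⊤ : ℕ∞) (fun ζ => V ζ ρ)) →
      ∀ ξ a b μ, cov Ch e a (cov Ch e b V) ξ μ - cov Ch e b (cov Ch e a V) ξ μ
        = ∑ β, ∑ lam, ∑ σ, Riem ξ μ β lam σ * e a ξ lam * e b ξ σ * V ξ β) :
    ∀ ξ (a b c d : Fin 3),
      (∑ α, ω d ξ α * ∑ β, ∑ γ, ∑ δ,
        Riem ξ α β γ δ * e a ξ β * e b ξ γ * e c ξ δ)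
      = RbarF (fun ζ x y z => Gbar Ch e ω x y z ζ) d a b c ξ
        - sff Ch e n a c ξ * PsiF Ch e ω ℓ d b ξ
        + sff Ch e n a b ξ * PsiF Ch e ω ℓ d c ξ := by
  intro ξ a b c d
  have hcsym := cov_e_symm (Ch := Ch) (e := e) hChsym hesym
  have hGsym : ∀ x y z : Fin 3, Gbar Ch e ω x y z ξ = Gbar Ch e ω x z y ξ := fun x y z =>
    Finset.sum_congr rfl fun μ _ => by rw [hcsym ξ z y μ]
  have hKsym : ∀ x y : Fin 3, sff Ch e n x y ξ = sff Ch e n y x ξ := fun x y => by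
    unfold sff
    congr 1
    exact Finset.sum_congr rfl fun μ _ => by rw [hcsym ξ x y μ]
  have hR : ∀ α, (∑ β, ∑ γ, ∑ δ, Riem ξ α β γ δ * e a ξ β * e b ξ γ * e c ξ δ)
      = cov Ch e b (cov Ch e c (e a)) ξ α - cov Ch e c (cov Ch e b (e a)) ξ α := by
    intro α
    rw [hRic (e a) (he a) ξ b c α]
    exact Finset.sum_congr rfl fun β _ => Finset.sum_congr rfl fun γ _ =>
      Finset.sum_congr rfl fun δ _ => by ring
  have e1 := key_contraction hChsym he hℓs hns hωs hChs hωl hωe hcomp ξ a b c d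
  have e2 := key_contraction hChsym he hℓs hns hωs hChs hωl hωe hcomp ξ a c b d
  calc (∑ α, ω d ξ α * ∑ β, ∑ γ, ∑ δ, Riem ξ α β γ δ * e a ξ β * e b ξ γ * e c ξ δ)
      = ∑ α, ω d ξ α * (cov Ch e b (cov Ch e c (e a)) ξ α
          - cov Ch e c (cov Ch e b (e a)) ξ α) :=
        Finset.sum_congr rfl fun α _ => by rw [hR α]
    _ = (∑ α, ω d ξ α * cov Ch e b (cov Ch e c (e a)) ξ α)
        - ∑ α, ω d ξ α * cov Ch e c (cov Ch e b (e a)) ξ α := by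
        simp only [mul_sub, Finset.sum_sub_distrib]
    _ = (pd (fun ζ => Gbar Ch e ω d a c ζ) b ξ
          + (∑ f, Gbar Ch e ω f a c ξ * Gbar Ch e ω d f b ξ)
          - sff Ch e n c a ξ * PsiF Ch e ω ℓ d b ξ)
        - (pd (fun ζ => Gbar Ch e ω d a b ζ) c ξ
          + (∑ f, Gbar Ch e ω f a b ξ * Gbar Ch e ω d f c ξ)
          - sff Ch e n b a ξ * PsiF Ch e ω ℓ d c ξ) := by rw [e1, e2]
    _ = RbarF (fun ζ x y z => Gbar Ch e ω x y z ζ) d a b c ξ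
        - sff Ch e n a c ξ * PsiF Ch e ω ℓ d b ξ
        + sff Ch e n a b ξ * PsiF Ch e ω ℓ d c ξ := by
        unfold RbarF
        have hq1 : (∑ f, Gbar Ch e ω f a c ξ * Gbar Ch e ω d f b ξ)
            = ∑ f, Gbar Ch e ω d b f ξ * Gbar Ch e ω f a c ξ :=
          Finset.sum_congr rfl fun f _ => by rw [hGsym d f b]; ring
        have hq2 : (∑ f, Gbar Ch e ω f a b ξ * Gbar Ch e ω d f c ξ)
            = ∑ f, Gbar Ch e ω d c f ξ * Gbar Ch e ω f a b ξ :=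
          Finset.sum_congr rfl fun f _ => by rw [hGsym d f c]; ring
        rw [hq1, hq2, hKsym c a, hKsym b a]
        ring

end
end

section
/- Let V be a 4-dimensional real vector space with nondegenerate symmetric bilinear form g, W a hyperplane with rigging ℓ and normal form n (n(ℓ)=1). Define g^{ab} = g^{μν} ω^a_μ ω^b_ν using a tangent frame e_a of W with dual ω^a (ω^a(ℓ)=0). Then g^{ab} is degenerate if and only if g(ℓ, ℓ) = 0; moreover ℓ^α ℓ_α = -(η_{123})² det(g^{ab}) where η_{123} = η(ℓ, e_1, e_2, e_3) for the metric volume form η. -/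
/-- In a 4-dimensional oriented real vector space (coordinates
`Fin 4 → ℝ`) with nondegenerate symmetric Lorentzian bilinear form given by the
matrix `G` and metric volume form `η = c · det` with `c² = -det G`, let `W` be
the hyperplane spanned by `e₁,e₂,e₃` with rigging `ℓ`, normal form `n`
(`n(e_a)=0`, `n(ℓ)=1`) and dual coframe `ω^a` (`ω^a(ℓ)=0`, `ω^a(e_b)=δ^a_b`).
Then `g^{ab} = ω^a_μ (G⁻¹)^{μν} ω^b_ν` is degenerate iff `g(ℓ,ℓ) = 0`, and
moreover `ℓ^α ℓ_α = -(η₁₂₃)² det(g^{ab})` with `η₁₂₃ = η(ℓ,e₁,e₂,e₃)`. -/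
theorem stmt13 (G : Matrix (Fin 4) (Fin 4) ℝ) (hGsym : G.IsSymm)
    (c : ℝ) (hc : c ≠ 0) (hcdet : c ^ 2 = -G.det)
    (e : Fin 3 → Fin 4 → ℝ) (ℓ : Fin 4 → ℝ)
    (n : Fin 4 → ℝ) (ω : Fin 3 → Fin 4 → ℝ)
    (hne : ∀ a, ∑ μ, n μ * e a μ = 0) (hnl : ∑ μ, n μ * ℓ μ = 1)
    (hωl : ∀ a, ∑ μ, ω a μ * ℓ μ = 0)
    (hωe : ∀ a b, ∑ μ, ω a μ * e b μ = if a = b then (1 : ℝ) else 0)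
    (gab : Matrix (Fin 3) (Fin 3) ℝ)
    (hgab : ∀ a b, gab a b = ∑ μ, ∑ ν, ω a μ * G⁻¹ μ ν * ω b ν)
    (η123 : ℝ)
    (hη123 : η123 = c * (Matrix.of fun (μ i : Fin 4) => (Fin.cons ℓ e : Fin 4 → Fin 4 → ℝ) i μ).det) :
    (gab.det = 0 ↔ (∑ μ, ∑ ν, ℓ μ * G μ ν * ℓ ν) = 0)
      ∧ (∑ μ, ∑ ν, ℓ μ * G μ ν * ℓ ν) = -(η123 ^ 2) * gab.det := by
  set B : Matrix (Fin 4) (Fin 4) ℝ := Matrix.of (Fin.cons ℓ e) with hBdef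
  set A : Matrix (Fin 4) (Fin 4) ℝ := Matrix.of (Fin.cons n ω) with hAdef
  have hAB : A * B.transpose = 1 := by
    ext i j
    rw [Matrix.mul_apply]
    simp only [hAdef, hBdef, Matrix.transpose_apply, Matrix.of_apply]
    induction i using Fin.cases with
    | zero =>
      induction j using Fin.cases with
      | zero => simpa using hnl
      | succ b => simpa [Matrix.one_apply, (Fin.succ_ne_zero b).symm] using hne b
    | succ a =>
      induction j using Fin.cases with
      | zero => simpa [Matrix.one_apply, Fin.succ_ne_zero a] using hωl a
      | succ b => simpa [Matrix.one_apply, Fin.succ_inj] using hωe a b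
  have hdetprod : A.det * B.det = 1 := by
    have := congrArg Matrix.det hAB
    rwa [Matrix.det_mul, Matrix.det_transpose, Matrix.det_one] at this
  have hdetB : B.det ≠ 0 := by
    intro h; rw [h, mul_zero] at hdetprod; exact one_ne_zero hdetprod.symm
  have hdetG : G.det ≠ 0 := by
    intro h
    rw [h, neg_zero, pow_eq_zero_iff (two_ne_zero)] at hcdet
    exact hc hcdet
  set S : Matrix (Fin 4) (Fin 4) ℝ := B * G * B.transpose with hSdef
  have hdetS : S.det = B.det ^ 2 * G.det := by
    rw [hSdef, Matrix.det_mul, Matrix.det_mul, Matrix.det_transpose]; ring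
  have hdetS0 : S.det ≠ 0 := by
    rw [hdetS]; exact mul_ne_zero (pow_ne_zero _ hdetB) hdetG
  have hS00 : S 0 0 = ∑ μ, ∑ ν, ℓ μ * G μ ν * ℓ ν := by
    simp only [hSdef, Matrix.mul_apply, Matrix.transpose_apply, Finset.sum_mul]
    rw [Finset.sum_comm]
    simp [hBdef]
  have hBTinv : B.transpose⁻¹ = A := Matrix.inv_eq_left_inv hAB
  have hBinv : B⁻¹ = A.transpose := by
    refine Matrix.inv_eq_right_inv ?_
    have := congrArg Matrix.transpose hAB
    rwa [Matrix.transpose_mul, Matrix.transpose_transpose, Matrix.transpose_one] at this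
  have hSinv : S⁻¹ = A * G⁻¹ * A.transpose := by
    rw [hSdef, Matrix.mul_inv_rev, Matrix.mul_inv_rev, hBTinv, hBinv, Matrix.mul_assoc]
  have hgab' : gab = (S⁻¹).submatrix Fin.succ Fin.succ := by
    ext a b
    rw [hgab a b, Matrix.submatrix_apply, hSinv]
    simp only [Matrix.mul_apply, Matrix.transpose_apply, Finset.sum_mul, hAdef,
      Matrix.of_apply, Fin.cons_succ]
    rw [Finset.sum_comm]
  have hadj : (S⁻¹).adjugate 0 0 = gab.det := by
    rw [hgab', Matrix.adjugate_fin_succ_eq_det_submatrix]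
    simp [Fin.succAbove_zero]
  have hSinvinv : (S⁻¹)⁻¹ = S := Matrix.nonsing_inv_nonsing_inv S (isUnit_iff_ne_zero.mpr hdetS0)
  have hdetSinv : (S⁻¹).det = S.det⁻¹ := by rw [Matrix.det_nonsing_inv, Ring.inverse_eq_inv]
  have hadjS : (S⁻¹).adjugate = S.det⁻¹ • S := by
    have h1 : (S⁻¹)⁻¹ = Ring.inverse (S⁻¹).det • (S⁻¹).adjugate := Matrix.inv_def _
    rw [hSinvinv, hdetSinv, Ring.inverse_eq_inv, inv_inv] at h1
    have := congrArg (fun M => S.det⁻¹ • M) h1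
    simpa [smul_smul, inv_mul_cancel₀ hdetS0] using this.symm
  have key : S 0 0 = S.det * gab.det := by
    rw [← hadj, hadjS]
    simp [Matrix.smul_apply, smul_eq_mul]
    field_simp
  have hη2 : η123 ^ 2 = -S.det := by
    have hBt : (Matrix.of fun (μ i : Fin 4) => (Fin.cons ℓ e : Fin 4 → Fin 4 → ℝ) i μ) = B.transpose := by
      ext μ i; simp [hBdef, Matrix.transpose_apply]
    rw [hη123, hBt, Matrix.det_transpose, mul_pow, hcdet, hdetS]
    ring
  constructor
  · rw [← hS00, key]
    simp [mul_eq_zero, hdetS0]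
  · rw [← hS00, key, ← neg_neg S.det, ← hη2]
end
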